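/- Let Σ be an alphabet, l ≥ 1, k ≥ 1, and u_1,…,u_k ∈ Σ^+ such that for each i the letters of u_i are pairwise distinct. Then ⋃_{q_1,…,q_k ∈ {1,l}} L^{(l)}_{(u_1,q_1)} ⋯ L^{(l)}_{(u_k,q_k)} = ⋃_{α ∈ [l]^k} ( R_l^α(u_1,…,u_k) ∩ S_l^α(u_1,…,u_k) ). -/

import Mathlib

/-- `u^l`: the concatenation of `l` copies of the word `u`. -/
def wpow {α : Type*} (u : List α) (l : ℕ) : List α := (List.replicate l u).flatten

/-- Concatenation of two languages. -/
def lconc {α : Type*} (L K : Set (List α)) : Set (List α) :=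
  {w | ∃ x ∈ L, ∃ y ∈ K, w = x ++ y}

/-- Concatenation of a list of languages. -/
def chainConc {α : Type*} (Ls : List (Set (List α))) : Set (List α) :=
  Ls.foldr lconc {[]}

/-- `L^{(l)}_{(u,q)}`: words containing `u` as a factor if `q < l`,
words containing `u^l` as a subword if `q = l`. -/
def Lul {α : Type*} (u : List α) (l q : ℕ) : Set (List α) :=
  if q < l then {w | u <:+: w} else {w | (wpow u l).Sublist w}

/-- The word `u₁^{a₁} ⋯ u_k^{a_k}`. -/
def bigSub {α : Type*} {k : ℕ} (u : Fin k → List α) (a : Fin k → ℕ) : List α :=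
  (List.finRange k).flatMap fun i => wpow (u i) (a i)


/-!
Both sides consist of the words `w` admitting a *block decomposition* `w = y₁ ⋯ y_k z` with
exponents `a ∈ [l]^k`: `u_i^{a_i}` is a subword of `y_i` and, when `a_i < l`, `u_i` is a factor
of `y_i` (`Blocks`). With exponents in `{1, l}^k` these are exactly the words of the left-hand side.

A block decomposition gives `u^a ⊑ w` and the `S`-condition at once. It also gives the
`R`-condition once its exponent sum is maximal: if some `u^{a + e_j}` is a subword of `w`, cutting
the blocks at leftmost embeddings produces a decomposition of larger sum. The factor occurrences
required for `a_i < l` survive this surgery, or can be absorbed into a block with one more copy of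
`u_i`, because the letters of `u_i` are distinct: its first letter does not occur in a proper
suffix of `u_i`, its last letter not in a proper prefix.

Conversely, given `a` with `w ∈ R ∩ S`, cut `w` from left to right: after a leftmost embedding of
`u_i^l` when `a_i = l`, and after the occurrence of `u_i` provided by `S` when `a_i < l`. By `R`
the previous cut cannot have passed the start of that occurrence, since otherwise all of
`u_i^{a_i} ⋯ u_k^{a_k}` would fit after it.
-/

open List

section Words
variable {α : Type*}

theorem wpow_succ (v : List α) (a : ℕ) : wpow v (a + 1) = v ++ wpow v a := by
  simp [wpow, List.replicate_succ]

theorem wpow_succ' (v : List α) (a : ℕ) : wpow v (a + 1) = wpow v a ++ v := by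
  simp [wpow, List.replicate_succ']

theorem wpow_one (v : List α) : wpow v 1 = v := by
  simp [wpow]

theorem cons_sublist_of_cons_sublist_append {c : α} {T A B : List α} (hc : c ∉ A)
    (h : c :: T <+ A ++ B) : c :: T <+ B := by
  obtain ⟨_ | ⟨d, x⟩, y, hxy, hx, hy⟩ := sublist_append_iff.mp h
  · simpa [hxy] using hy
  · obtain ⟨rfl, -⟩ := List.cons_eq_cons.mp hxy
    exact absurd (hx.subset (mem_cons_self ..)) hc

theorem concat_sublist_of_concat_sublist_append {c : α} {T A B : List α} (hc : c ∉ B)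
    (h : T ++ [c] <+ A ++ B) : T ++ [c] <+ A := by
  rw [← reverse_sublist] at h ⊢
  simp only [reverse_append, reverse_singleton, singleton_append] at h ⊢
  exact cons_sublist_of_cons_sublist_append (by simpa using hc) h

theorem append_sublist_of_append_sublist_tail_append {v T V : List α} (hv : v.Nodup)
    (h : v ++ T <+ v.tail ++ V) : v ++ T <+ V := by
  cases v with
  | nil => simpa using h
  | cons c t => exact cons_sublist_of_cons_sublist_append (nodup_cons.mp hv).1 h

theorem append_sublist_of_append_sublist_append_take {v T Q : List α} {m : ℕ} (hv : v.Nodup)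
    (hm : m < v.length) (h : T ++ v <+ Q ++ v.take m) : T ++ v <+ Q := by
  rcases eq_nil_or_concat' v with rfl | ⟨v, c, rfl⟩
  · simp at hm
  have hc : c ∉ (v ++ [c]).take m := by
    rw [take_append_of_le_length (by simpa using hm)]
    exact fun hmem => (nodup_append.mp hv).2.2 c (take_subset _ _ hmem) c (mem_singleton_self c) rfl
  rw [← append_assoc] at h ⊢
  exact concat_sublist_of_concat_sublist_append hc h

theorem exists_split_around {x R Q v V : List α} (h : x ++ R <+ Q ++ v ++ V) :
    x <+ Q ++ v ∨
      ∃ W₁ W₂, Q ++ v ++ V = W₁ ++ W₂ ∧ x <+ W₁ ∧ v <:+: W₁ ∧ R <+ W₂ ∧ W₂ <:+ V := by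
  obtain ⟨W₁, W₂, hW, hx, hR⟩ := append_sublist_iff.mp h
  have hW₁ : W₁ <+: Q ++ v ++ V := hW ▸ prefix_append W₁ W₂
  have hW₂ : W₂ <:+ Q ++ v ++ V := hW ▸ suffix_append W₁ W₂
  rcases le_total W₁.length (Q ++ v).length with hlen | hlen
  · exact Or.inl (hx.trans (prefix_of_prefix_length_le hW₁ (prefix_append _ V) hlen).sublist)
  · have hQv : Q ++ v <+: W₁ := prefix_of_prefix_length_le (prefix_append _ V) hW₁ hlen
    have hlen₂ : W₂.length ≤ V.length := by
      have := congrArg length hW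
      simp only [length_append] at this hlen
      omega
    exact Or.inr ⟨W₁, W₂, hW, hx, (infix_append Q v []).trans (by simpa using hQv.isInfix), hR,
      suffix_of_suffix_length_le hW₂ (suffix_append _ V) hlen₂⟩

theorem exists_leftmost_split {x R W : List α} (h : x ++ R <+ W) :
    ∃ e, x <+ W.take e ∧ R <+ W.drop e ∧ ∀ m, x <+ W.take m → e ≤ m := by
  classical
  obtain ⟨W₁, W₂, rfl, hx, hR⟩ := append_sublist_iff.mp h
  have hex : ∃ m, x <+ (W₁ ++ W₂).take m := ⟨W₁.length, by simpa using hx⟩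
  have hle : Nat.find hex ≤ W₁.length := Nat.find_min' hex (by simpa using hx)
  refine ⟨Nat.find hex, Nat.find_spec hex, ?_, fun m hm => Nat.find_min' hex hm⟩
  exact (by simpa using hR : R <+ (W₁ ++ W₂).drop W₁.length).trans (drop_sublist_drop_left _ hle)

theorem suffix_or_suffix_tail_append {W p v V : List α} (h : W <:+ p ++ v ++ V) :
    v ++ V <:+ W ∨ W <:+ v.tail ++ V := by
  rcases suffix_or_suffix_of_suffix h (append_assoc p v V ▸ suffix_append p (v ++ V)) with h' | h'
  · cases v with
    | nil => exact Or.inr h'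
    | cons c t =>
      rcases suffix_cons_iff.mp h' with rfl | h''
      · exact Or.inl (suffix_refl _)
      · exact Or.inr h''
  · exact Or.inl h'

end Words

section Blocks
variable {ι α : Type*} (l : ℕ) (u : ι → List α)

def IsBlock (v : List α) (a : ℕ) (y : List α) : Prop :=
  1 ≤ a ∧ a ≤ l ∧ wpow v a <+ y ∧ (a < l → v <:+: y)

def powWord (a : ι → ℕ) (is : List ι) : List α :=
  is.flatMap fun i => wpow (u i) (a i)

def Blocks (a : ι → ℕ) : List ι → List α → Prop
  | [], _ => True
  | i :: is, w => ∃ y z, w = y ++ z ∧ IsBlock l (u i) (a i) y ∧ Blocks a is z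

def BlocksGE (is : List ι) (s : ℕ) (w : List α) : Prop :=
  ∃ b : ι → ℕ, s ≤ (is.map b).sum ∧ Blocks l u b is w

variable {l u}

theorem IsBlock.mono {v y y' : List α} {a : ℕ} (h : IsBlock l v a y) (hy : y <:+: y') :
    IsBlock l v a y' :=
  ⟨h.1, h.2.1, h.2.2.1.trans hy.sublist, fun ha => (h.2.2.2 ha).trans hy⟩

@[simp]
theorem powWord_nil (a : ι → ℕ) : powWord u a [] = [] := rfl

@[simp]
theorem powWord_cons (a : ι → ℕ) (i : ι) (is : List ι) :
    powWord u a (i :: is) = wpow (u i) (a i) ++ powWord u a is := rfl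

theorem powWord_append (a : ι → ℕ) (is₁ is₂ : List ι) :
    powWord u a (is₁ ++ is₂) = powWord u a is₁ ++ powWord u a is₂ :=
  flatMap_append

theorem powWord_congr {a b : ι → ℕ} {is : List ι} (h : ∀ i ∈ is, a i = b i) :
    powWord u a is = powWord u b is :=
  flatMap_congr fun i hi => by rw [h i hi]

theorem powWord_update_of_not_mem [DecidableEq ι] {a : ι → ℕ} {i : ι} {is : List ι} (c : ℕ)
    (hi : i ∉ is) : powWord u (Function.update a i c) is = powWord u a is :=
  powWord_congr fun _ hj => Function.update_of_ne (ne_of_mem_of_not_mem hj hi) _ _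

theorem powWord_update_split [DecidableEq ι] {a : ι → ℕ} {is₁ is₂ : List ι} {i : ι} (c : ℕ)
    (h : (is₁ ++ i :: is₂).Nodup) :
    powWord u (Function.update a i c) (is₁ ++ i :: is₂) =
      powWord u a is₁ ++ (wpow (u i) c ++ powWord u a is₂) := by
  have h₁ : i ∉ is₁ := fun hi => (nodup_append.mp h).2.2 i hi i (mem_cons_self ..) rfl
  have h₂ : i ∉ is₂ := (nodup_cons.mp (nodup_append.mp h).2.1).1
  rw [powWord_append, powWord_cons, powWord_update_of_not_mem c h₁,
    powWord_update_of_not_mem c h₂, Function.update_self]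

theorem Blocks.sublist {a : ι → ℕ} : ∀ {is : List ι} {w : List α},
    Blocks l u a is w → powWord u a is <+ w
  | [], _, _ => nil_sublist _
  | _ :: _, _, ⟨_, _, rfl, hy, hz⟩ => hy.2.2.1.append hz.sublist

theorem Blocks.mono {a : ι → ℕ} : ∀ {is : List ι} {w w' : List α},
    Blocks l u a is w → w <:+ w' → Blocks l u a is w'
  | [], _, _, _, _ => trivial
  | _ :: _, _, _, ⟨y, z, rfl, hy, hz⟩, ⟨x, hx⟩ =>
    ⟨x ++ y, z, by simp [← hx], hy.mono (suffix_append x y).isInfix, hz⟩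

theorem Blocks.congr {a b : ι → ℕ} : ∀ {is : List ι} {w : List α},
    (∀ i ∈ is, a i = b i) → Blocks l u a is w → Blocks l u b is w
  | [], _, _, _ => trivial
  | i :: _, _, hab, ⟨y, z, hw, hy, hz⟩ =>
    ⟨y, z, hw, hab i (mem_cons_self ..) ▸ hy,
      hz.congr fun j hj => hab j (mem_cons_of_mem _ hj)⟩

theorem Blocks.mem_Icc {a : ι → ℕ} : ∀ {is : List ι} {w : List α},
    Blocks l u a is w → ∀ i ∈ is, 1 ≤ a i ∧ a i ≤ l
  | [], _, _, _, hi => absurd hi (not_mem_nil)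
  | _ :: _, _, ⟨_, _, _, hy, hz⟩, _, hi => by
    rcases mem_cons.mp hi with rfl | hi
    · exact ⟨hy.1, hy.2.1⟩
    · exact hz.mem_Icc _ hi

theorem Blocks.sum_le {a : ι → ℕ} {is : List ι} {w : List α} (h : Blocks l u a is w) :
    (is.map a).sum ≤ l * is.length := by
  have := sum_le_card_nsmul (is.map a) l (by simpa using fun i hi => (h.mem_Icc i hi).2)
  simpa [mul_comm] using this

theorem Blocks.blocksGE {a : ι → ℕ} {is : List ι} {w : List α} (h : Blocks l u a is w) :
    BlocksGE l u is (is.map a).sum w :=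
  ⟨a, le_rfl, h⟩

theorem BlocksGE.mono {is : List ι} {s t : ℕ} {w : List α} (h : BlocksGE l u is t w)
    (hst : s ≤ t) : BlocksGE l u is s w :=
  let ⟨b, hb, hB⟩ := h; ⟨b, hst.trans hb, hB⟩

theorem BlocksGE.cons [DecidableEq ι] {is : List ι} {i : ι} {s c : ℕ} {y z : List α}
    (hi : i ∉ is) (hy : IsBlock l (u i) c y) (hz : BlocksGE l u is s z) :
    BlocksGE l u (i :: is) (c + s) (y ++ z) := by
  obtain ⟨b, hs, hb⟩ := hz
  have hupd : ∀ j ∈ is, b j = Function.update b i c j := fun j hj =>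
    (Function.update_of_ne (ne_of_mem_of_not_mem hj hi) _ _).symm
  refine ⟨Function.update b i c, ?_, y, z, rfl, by simpa using hy, hb.congr hupd⟩
  rw [map_cons, sum_cons, Function.update_self, ← map_congr_left hupd]
  omega

end Blocks

section Improve
variable {ι α : Type*} {l : ℕ}

theorem IsBlock.split_of_suffix {v y w₂ W R : List α} {c : ℕ} (hv : v.Nodup)
    (hy : IsBlock l v c y) (hsuf : W <:+ y ++ w₂) (h : wpow v c ++ R <+ W) :
    (∃ W₁ W₂, W = W₁ ++ W₂ ∧ IsBlock l v c W₁ ∧ R <+ W₂ ∧ W₂ <:+ y ++ w₂) ∨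
      (∃ W₁ W₂, W = W₁ ++ W₂ ∧ IsBlock l v c W₁ ∧ w₂ <:+ W₂) ∨
      ∃ y' z, y ++ w₂ = y' ++ z ∧ IsBlock l v (c + 1) y' ∧ R <+ z := by
  by_cases hcl : c < l
  swap
  · obtain ⟨W₁, W₂, rfl, hx, hR⟩ := append_sublist_iff.mp h
    exact Or.inl ⟨W₁, W₂, rfl, ⟨hy.1, hy.2.1, hx, fun h => absurd h hcl⟩, hR,
      (suffix_append W₁ W₂).trans hsuf⟩
  obtain ⟨p, sfx, rfl⟩ := hy.2.2.2 hcl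
  rw [show p ++ v ++ sfx ++ w₂ = p ++ v ++ (sfx ++ w₂) by simp] at hsuf ⊢
  rcases suffix_or_suffix_tail_append hsuf with ⟨Q, rfl⟩ | hsufV
  · rw [← append_assoc] at h
    rcases exists_split_around h with hx | ⟨W₁, W₂, hW₁₂, hx, hfac, hR, hW₂⟩
    · exact Or.inr (Or.inl ⟨Q ++ v, sfx ++ w₂, by simp,
        ⟨hy.1, hy.2.1, hx, fun _ => (infix_append Q v []).trans (by simp)⟩, suffix_append sfx w₂⟩)
    · exact Or.inl ⟨W₁, W₂, by rw [← hW₁₂]; simp, ⟨hy.1, hy.2.1, hx, fun _ => hfac⟩, hR,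
        hW₂.trans (suffix_append (p ++ v) _)⟩
  · -- The occurrence of `v` in `y` is lost in `W`, so all of `wpow v c ++ R` fits after it.
    obtain ⟨d, hd⟩ : ∃ d, c = d + 1 := ⟨c - 1, by have := hy.1; omega⟩
    have hV : wpow v c ++ R <+ sfx ++ w₂ := by
      rw [hd, wpow_succ, append_assoc] at h ⊢
      exact append_sublist_of_append_sublist_tail_append hv (h.trans hsufV.sublist)
    obtain ⟨V₁, V₂, hV₁₂, hx, hR⟩ := append_sublist_iff.mp hV
    refine Or.inr (Or.inr ⟨p ++ v ++ V₁, V₂, by simp [hV₁₂],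
      ⟨by omega, hcl, ?_, fun _ => infix_append p v V₁⟩, hR⟩)
    rw [wpow_succ, append_assoc]
    exact (hx.append_left v).trans (sublist_append_right p _)

theorem IsBlock.split_of_succ {v y g w₂ R : List α} {c : ℕ} (hy : IsBlock l v c y) (hcl : c < l)
    (h : wpow v (c + 1) ++ R <+ g ++ (y ++ w₂)) :
    (∃ W₁ W₂, g ++ (y ++ w₂) = W₁ ++ W₂ ∧ IsBlock l v (c + 1) W₁ ∧ w₂ <:+ W₂) ∨
      ∃ W₁ W₂, g ++ (y ++ w₂) = W₁ ++ W₂ ∧ IsBlock l v (c + 1) W₁ ∧ R <+ W₂ ∧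
        W₂ <:+ y ++ w₂ := by
  obtain ⟨p, sfx, rfl⟩ := hy.2.2.2 hcl
  have hW : wpow v (c + 1) ++ R <+ g ++ p ++ v ++ (sfx ++ w₂) := by simpa using h
  rcases exists_split_around hW with hx | ⟨W₁, W₂, hW₁₂, hx, hfac, hR, hW₂⟩
  · exact Or.inl ⟨g ++ p ++ v, sfx ++ w₂, by simp,
      ⟨by omega, hcl, hx, fun _ => (infix_append (g ++ p) v []).trans (by simp)⟩,
      suffix_append sfx w₂⟩
  · exact Or.inr ⟨W₁, W₂, by rw [← hW₁₂]; simp, ⟨by omega, hcl, hx, fun _ => hfac⟩, hR,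
      hW₂.trans (by simpa using suffix_append (p ++ v) (sfx ++ w₂))⟩

theorem IsBlock.leftmost_split {v y g w₂ R : List α} {c : ℕ} (hv : v.Nodup)
    (hy : IsBlock l v c y) (h : wpow v c ++ R <+ g ++ (y ++ w₂)) :
    (∃ W₁ W₂, g ++ (y ++ w₂) = W₁ ++ W₂ ∧ IsBlock l v c W₁ ∧ R <+ W₂ ∧ w₂ <:+ W₂) ∨
      ∃ W₁ W₂, g ++ (y ++ w₂) = W₁ ++ W₂ ∧ IsBlock l v (c + 1) W₁ ∧ w₂ <:+ W₂ := by
  obtain ⟨e, hx, hR, hmin⟩ := exists_leftmost_split h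
  have hle : e ≤ (g ++ y).length := by
    refine hmin _ ?_
    rw [← append_assoc, take_left]
    exact hy.2.2.1.trans (sublist_append_right g y)
  have hw₂ : w₂ <:+ (g ++ (y ++ w₂)).drop e := by
    rw [← append_assoc, drop_append_of_le_length hle]
    exact suffix_append _ _
  by_cases hcl : c < l
  swap
  · exact Or.inl ⟨_, _, (take_append_drop e _).symm,
      ⟨hy.1, hy.2.1, hx, fun h => absurd h hcl⟩, hR, hw₂⟩
  obtain ⟨p, sfx, rfl⟩ := hy.2.2.2 hcl
  obtain ⟨Q, V, hV, hWeq⟩ : ∃ Q V, w₂ <:+ V ∧ g ++ (p ++ v ++ sfx ++ w₂) = Q ++ (v ++ V) :=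
    ⟨g ++ p, sfx ++ w₂, suffix_append sfx w₂, by simp⟩
  rw [hWeq] at hx hR hmin hw₂ ⊢
  rcases le_or_gt e Q.length with heQ | heQ
  · have hQ : wpow v c <+ Q := by
      simpa using hx.trans (take_sublist_take_left (l := Q ++ (v ++ V)) heQ)
    exact Or.inr ⟨Q ++ v, V, (append_assoc ..).symm, ⟨by omega, hcl,
      wpow_succ' v c ▸ hQ.append_right v, fun _ => (infix_append Q v []).trans (by simp)⟩, hV⟩
  · -- The leftmost embedding cannot end strictly inside this occurrence of `v`, since the last
    -- letter of `v` occurs in `v` only at the end.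
    have hQv : Q.length + v.length ≤ e := by
      by_contra! hlt
      obtain ⟨d, hd⟩ : ∃ d, c = d + 1 := ⟨c - 1, by have := hy.1; omega⟩
      have htake : (Q ++ (v ++ V)).take e = Q ++ v.take (e - Q.length) := by
        rw [take_append, take_of_length_le heQ.le, take_append_of_le_length (by omega)]
      rw [htake, hd, wpow_succ'] at hx
      have hQ := append_sublist_of_append_sublist_append_take hv (by omega) hx
      have := hmin Q.length (by simpa [hd, wpow_succ'] using hQ)
      omega
    have hpre : Q ++ v <+: (Q ++ (v ++ V)).take e :=
      prefix_of_prefix_length_le (by simp) (take_prefix _ _) (by simpa using hQv)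
    exact Or.inl ⟨_, _, (take_append_drop e _).symm, ⟨hy.1, hy.2.1, hx,
      fun _ => (infix_append Q v []).trans (by simpa using hpre.isInfix)⟩, hR, hw₂⟩

variable [DecidableEq ι] {u : ι → List α} {is : List ι}

theorem Blocks.blocksGE_or_blocksGE_succ (hnd : ∀ i ∈ is, (u i).Nodup) (his : is.Nodup)
    {a : ι → ℕ} {wOld W : List α} (hB : Blocks l u a is wOld) (hW : powWord u a is <+ W)
    (hcmp : W <:+ wOld ∨ wOld <:+ W) :
    BlocksGE l u is (is.map a).sum W ∨ BlocksGE l u is ((is.map a).sum + 1) wOld := by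
  induction is generalizing wOld W with
  | nil => exact Or.inl hB.blocksGE
  | cons i is ih =>
    rcases hcmp with hsuf | hsuf
    swap
    · exact Or.inl (hB.mono hsuf).blocksGE
    obtain ⟨y, w₂, rfl, hy, hB₂⟩ := hB
    obtain ⟨hi, his⟩ := nodup_cons.mp his
    replace ih W := @ih (fun j hj => hnd j (mem_cons_of_mem _ hj)) his w₂ W hB₂
    simp only [map_cons, sum_cons]
    have keep (h : BlocksGE l u is ((is.map a).sum + 1) w₂) :
        BlocksGE l u (i :: is) (a i + (is.map a).sum + 1) (y ++ w₂) :=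
      (h.cons hi hy).mono (by omega)
    rcases hy.split_of_suffix (hnd i (mem_cons_self ..)) hsuf hW with
      ⟨W₁, W₂, rfl, hW₁, hR, hW₂⟩ | ⟨W₁, W₂, rfl, hW₁, hw₂⟩ | ⟨y', z, hyz, hy', hR⟩
    · rcases ih _ hR (suffix_or_suffix_of_suffix hW₂ (suffix_append y w₂)) with h | h
      · exact Or.inl (h.cons hi hW₁)
      · exact Or.inr (keep h)
    · exact Or.inl ((hB₂.mono hw₂).blocksGE.cons hi hW₁)
    · rcases ih _ hR (suffix_or_suffix_of_suffix (hyz ▸ suffix_append y' z)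
          (suffix_append y w₂)) with h | h
      · exact Or.inr (hyz ▸ (h.cons hi hy').mono (by omega))
      · exact Or.inr (keep h)

theorem Blocks.blocksGE_succ_of_update_sublist (hnd : ∀ i ∈ is, (u i).Nodup) (his : is.Nodup)
    {a : ι → ℕ} {j : ι} (hj : j ∈ is) (hjl : a j < l) {wOld W : List α}
    (hB : Blocks l u a is wOld) (hsuf : wOld <:+ W)
    (hW : powWord u (Function.update a j (a j + 1)) is <+ W) :
    BlocksGE l u is ((is.map a).sum + 1) W := by
  induction is generalizing wOld W with
  | nil => exact absurd hj (not_mem_nil)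
  | cons i is ih =>
    obtain ⟨y, w₂, rfl, hy, hB₂⟩ := hB
    obtain ⟨g, rfl⟩ := hsuf
    obtain ⟨hi, his'⟩ := nodup_cons.mp his
    have hnd' : ∀ j ∈ is, (u j).Nodup := fun j hj => hnd j (mem_cons_of_mem _ hj)
    simp only [map_cons, sum_cons]
    by_cases hji : j = i
    · subst hji
      rw [← nil_append (j :: is), powWord_update_split _ (by simpa using his), powWord_nil,
        nil_append] at hW
      rcases hy.split_of_succ hjl hW with
        ⟨W₁, W₂, hW₁₂, hblk, hw₂⟩ | ⟨W₁, W₂, hW₁₂, hblk, hR, hW₂⟩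
      · rw [hW₁₂]
        exact ((hB₂.mono hw₂).blocksGE.cons hi hblk).mono (by omega)
      · rcases hB₂.blocksGE_or_blocksGE_succ hnd' his' hR
            (suffix_or_suffix_of_suffix hW₂ (suffix_append y w₂)) with h | h
        · rw [hW₁₂]
          exact (h.cons hi hblk).mono (by omega)
        · rw [← append_assoc]
          exact (h.cons hi (hy.mono (suffix_append g y).isInfix)).mono (by omega)
    · rw [powWord_cons, Function.update_of_ne (Ne.symm hji)] at hW
      have hjis : j ∈ is := (mem_cons.mp hj).resolve_left hji
      rcases hy.leftmost_split (hnd i (mem_cons_self ..)) hW with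
        ⟨W₁, W₂, hW₁₂, hblk, hR, hw₂⟩ | ⟨W₁, W₂, hW₁₂, hblk, hw₂⟩
      · rw [hW₁₂]
        exact ((ih hnd' his' hjis hB₂ hw₂ hR).cons hi hblk).mono (by omega)
      · rw [hW₁₂]
        exact ((hB₂.mono hw₂).blocksGE.cons hi hblk).mono (by omega)

end Improve

section Characterization
variable {ι α : Type*} {l : ℕ} {u : ι → List α} {is : List ι}

theorem Blocks.exists_maximal [DecidableEq ι] (hnd : ∀ i ∈ is, (u i).Nodup) (his : is.Nodup)
    {a : ι → ℕ} {w : List α} (hB : Blocks l u a is w) :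
    ∃ b, Blocks l u b is w ∧
      ∀ j ∈ is, b j < l → ¬ powWord u (Function.update b j (b j + 1)) is <+ w := by
  by_contra! H
  have hgrow (n : ℕ) : BlocksGE l u is n w := by
    induction n with
    | zero => exact ⟨a, Nat.zero_le _, hB⟩
    | succ n ih =>
      obtain ⟨b, hn, hb⟩ := ih
      obtain ⟨j, hj, hjl, hsub⟩ := H b hb
      exact (hb.blocksGE_succ_of_update_sublist hnd his hj hjl (suffix_refl w) hsub).mono
        (by omega)
  obtain ⟨b, hle, hb⟩ := hgrow (l * is.length + 1)
  have := hb.sum_le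
  omega

theorem Blocks.exists_factor_split {a : ι → ℕ} {i : ι} {is₂ : List ι} (hil : a i < l) :
    ∀ {is₁ : List ι} {w : List α}, Blocks l u a (is₁ ++ i :: is₂) w →
      ∃ P S, w = P ++ (u i ++ S) ∧ powWord u a is₁ <+ P ∧ powWord u a is₂ <+ S
  | [], _, ⟨y, z, hw, hy, hz⟩ => by
    obtain ⟨p, sfx, rfl⟩ := hy.2.2.2 hil
    exact ⟨p, sfx ++ z, by simp [hw], nil_sublist _, hz.sublist.trans (sublist_append_right _ _)⟩
  | _ :: _, _, ⟨y, z, hw, hy, hz⟩ => by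
    obtain ⟨P, S, rfl, hP, hS⟩ := exists_factor_split hil hz
    exact ⟨y ++ P, S, by simp [hw], hy.2.2.1.append hP, hS⟩

theorem blocks_of_forall_exists_factor {a : ι → ℕ} (hnd : ∀ i ∈ is, (u i).Nodup)
    (ha : ∀ i ∈ is, 1 ≤ a i ∧ a i ≤ l) {w : List α}
    (hocc : ∀ i is₂, i :: is₂ <:+ is → a i < l →
      ∃ P S, w = P ++ (u i ++ S) ∧ powWord u a is₂ <+ S ∧
        ¬ wpow (u i) (a i) ++ powWord u a is₂ <+ S)
    {W : List α} (hWw : W <:+ w) (hW : powWord u a is <+ W) :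
    Blocks l u (fun i => if a i < l then 1 else l) is W := by
  induction is generalizing W with
  | nil => trivial
  | cons i is ih =>
    have hai := ha i (mem_cons_self ..)
    replace ih W := @ih (fun j hj => hnd j (mem_cons_of_mem _ hj))
      (fun j hj => ha j (mem_cons_of_mem _ hj))
      (fun j is₂ hsuf => hocc j is₂ (hsuf.trans (suffix_cons i is))) W
    rw [powWord_cons] at hW
    by_cases hil : a i < l
    · obtain ⟨P, S, rfl, hR, hnot⟩ := hocc i is (suffix_refl _) hil
      rw [← append_assoc] at hWw
      rcases suffix_or_suffix_tail_append hWw with ⟨Q, rfl⟩ | hsufS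
      · refine ⟨Q ++ u i, S, by simp, ?_,
          ih _ ((suffix_append (u i) S).trans (suffix_append P _)) hR⟩
        simp only [if_pos hil]
        exact ⟨le_rfl, by omega, by simp [wpow_one],
          fun _ => (infix_append Q (u i) []).trans (by simp)⟩
      · -- The previous cut has passed the start of this occurrence of `u i`.
        obtain ⟨c, hc⟩ : ∃ c, a i = c + 1 := ⟨a i - 1, by omega⟩
        rw [hc, wpow_succ, append_assoc] at hW hnot
        exact absurd (append_sublist_of_append_sublist_tail_append (hnd i (mem_cons_self ..))
          (hW.trans hsufS.sublist)) hnot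
    · obtain ⟨W₁, W₂, rfl, hx, hR⟩ := append_sublist_iff.mp hW
      have hal : a i = l := by omega
      refine ⟨W₁, W₂, rfl, ?_, ih _ ((suffix_append W₁ W₂).trans hWw) hR⟩
      simp only [if_neg hil]
      exact ⟨by omega, le_rfl, hal ▸ hx, fun h => absurd h (lt_irrefl l)⟩

theorem isBlock_iff_mem_Lul {v y : List α} {q : ℕ} (hl : 1 ≤ l) (hq : q = 1 ∨ q = l) :
    IsBlock l v q y ↔ y ∈ Lul v l q := by
  unfold Lul IsBlock
  split_ifs with hql
  · obtain rfl : q = 1 := hq.resolve_right hql.ne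
    simp only [wpow_one, Set.mem_ofPred_eq]
    exact ⟨fun h => h.2.2.2 hql, fun h => ⟨le_rfl, hl, h.sublist, fun _ => h⟩⟩
  · obtain rfl : q = l := by omega
    simp only [Set.mem_ofPred_eq, lt_irrefl, IsEmpty.forall_iff, and_true]
    exact ⟨fun h => h.2.2, fun h => ⟨hl, le_rfl, h⟩⟩

theorem mem_chainConc_iff_blocks {q : ι → ℕ} (hl : 1 ≤ l) (hq : ∀ i ∈ is, q i = 1 ∨ q i = l)
    (his : is ≠ []) {w : List α} :
    w ∈ chainConc (is.map fun i => Lul (u i) l (q i)) ↔ Blocks l u q is w := by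
  induction is generalizing w with
  | nil => exact absurd rfl his
  | cons i is ih =>
    have hqi (y : List α) := isBlock_iff_mem_Lul (v := u i) (y := y) hl (hq i (mem_cons_self ..))
    rcases eq_or_ne is [] with rfl | his'
    · simp only [map_cons, map_nil, chainConc, foldr_cons, foldr_nil, lconc,
        Set.mem_singleton_iff, Set.mem_ofPred_eq, exists_eq_left, append_nil, Blocks, and_true]
      exact ⟨fun ⟨y, hy, hw⟩ => ⟨y, [], by simp [hw], (hqi y).mpr hy⟩,
        fun ⟨y, z, hw, hy⟩ => ⟨w, (hqi w).mp (hy.mono (hw ▸ (prefix_append y z).isInfix)), rfl⟩⟩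
    · replace ih := @ih (fun j hj => hq j (mem_cons_of_mem _ hj)) his'
      simp only [map_cons, chainConc, foldr_cons, lconc, Set.mem_ofPred_eq] at ih ⊢
      simp only [Blocks, ← ih, hqi]
      exact ⟨fun ⟨y, hy, z, hz, hw⟩ => ⟨y, z, hw, hy, hz⟩,
        fun ⟨y, z, hw, hy, hz⟩ => ⟨y, hy, z, hz, hw⟩⟩

end Characterization

section FinRange
variable {k : ℕ}

theorem finRange_eq_take_append_cons_drop (i : Fin k) :
    finRange k = (finRange k).take i ++ i :: (finRange k).drop (i + 1) := by
  conv_lhs => rw [← take_append_drop i (finRange k)]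
  rw [drop_eq_getElem_cons (by simp), getElem_finRange]
  rfl

theorem drop_eq_of_cons_suffix_finRange {i : Fin k} {is : List (Fin k)}
    (h : i :: is <:+ finRange k) : is = (finRange k).drop (i + 1) := by
  obtain ⟨is₁, h⟩ := h
  have hlen : is₁.length < (finRange k).length := by simp [← h]
  have hi : (finRange k)[is₁.length] = i := by simp [← h]
  rw [getElem_finRange] at hi
  rw [← h, ← hi]
  simp

theorem bigSub_update {α : Type*} (u : Fin k → List α) (a : Fin k → ℕ) (i : Fin k) (c : ℕ) :
    bigSub u (Function.update a i c) =
      powWord u a ((finRange k).take i) ++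
        (wpow (u i) c ++ powWord u a ((finRange k).drop (i + 1))) := by
  have hsplit := finRange_eq_take_append_cons_drop i
  change powWord u _ (finRange k) = _
  conv_lhs => rw [hsplit]
  exact powWord_update_split c (hsplit ▸ nodup_finRange k)

end FinRange

theorem stmt_11_general {α : Type*} (l k : ℕ) (hl : 1 ≤ l) (hk : 1 ≤ k)
    (u : Fin k → List α) (hnd : ∀ i, (u i).Nodup) :
    (⋃ q ∈ {q : Fin k → ℕ | ∀ i, q i = 1 ∨ q i = l},
        chainConc ((List.finRange k).map fun i => Lul (u i) l (q i))) =
      ⋃ a ∈ {a : Fin k → ℕ | ∀ i, 1 ≤ a i ∧ a i ≤ l},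
        (({w | (bigSub u a).Sublist w} ∩
            ⋂ i ∈ {i : Fin k | a i < l},
              {w : List α | (bigSub u (Function.update a i (a i + 1))).Sublist w}ᶜ) ∩
          ⋂ i ∈ {i : Fin k | a i < l},
            lconc
              {w | (((List.finRange k).take i.val).flatMap
                      fun i' => wpow (u i') (a i')).Sublist w}
              (lconc {u i}
                {w | (((List.finRange k).drop (i.val + 1)).flatMap
                        fun i' => wpow (u i') (a i')).Sublist w})) := by
  have hnd' : ∀ i ∈ finRange k, (u i).Nodup := fun i _ => hnd i
  have hne : finRange k ≠ [] := ne_nil_of_length_pos (by rw [length_finRange]; exact hk)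
  ext w
  simp only [Set.mem_iUnion, Set.mem_ofPred_eq, exists_prop, Set.mem_inter_iff, Set.mem_iInter,
    Set.mem_compl_iff]
  constructor
  · rintro ⟨q, hq, hw⟩
    rw [mem_chainConc_iff_blocks hl (fun i _ => hq i) hne] at hw
    obtain ⟨a, ha, hmax⟩ := hw.exists_maximal hnd' (nodup_finRange k)
    refine ⟨a, fun i => ha.mem_Icc i (mem_finRange i),
      ⟨ha.sublist, fun i hi => hmax i (mem_finRange i) hi⟩, fun i hi => ?_⟩
    rw [finRange_eq_take_append_cons_drop i] at ha
    obtain ⟨P, S, rfl, hP, hS⟩ := ha.exists_factor_split hi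
    exact ⟨P, hP, u i ++ S, ⟨u i, rfl, S, hS, rfl⟩, rfl⟩
  · rintro ⟨a, ha, ⟨hsub, hmax⟩, hfac⟩
    have hq (i : Fin k) : (if a i < l then 1 else l) = 1 ∨ (if a i < l then 1 else l) = l := by
      split_ifs <;> simp
    refine ⟨fun i => if a i < l then 1 else l, hq, ?_⟩
    rw [mem_chainConc_iff_blocks hl (fun i _ => hq i) hne]
    refine blocks_of_forall_exists_factor hnd' (fun i _ => ha i) ?_ (suffix_refl w) hsub
    intro i is₂ hsuf hil
    obtain rfl := drop_eq_of_cons_suffix_finRange hsuf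
    obtain ⟨P, hP, _, ⟨_, rfl, S, hS, rfl⟩, rfl⟩ := hfac i hil
    refine ⟨P, S, rfl, hS, fun hbump => hmax i hil ?_⟩
    rw [bigSub_update, wpow_succ, append_assoc]
    exact hP.append (hbump.append_left (u i))

theorem stmt_11 {α : Type*} (l k : ℕ) (hl : 1 ≤ l) (hk : 1 ≤ k)
    (u : Fin k → List α) (hne : ∀ i, u i ≠ []) (hnd : ∀ i, (u i).Nodup) :
    (⋃ q ∈ {q : Fin k → ℕ | ∀ i, q i = 1 ∨ q i = l},
        chainConc ((List.finRange k).map fun i => Lul (u i) l (q i))) =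
      ⋃ a ∈ {a : Fin k → ℕ | ∀ i, 1 ≤ a i ∧ a i ≤ l},
        (({w | (bigSub u a).Sublist w} ∩
            ⋂ i ∈ {i : Fin k | a i < l},
              {w : List α | (bigSub u (Function.update a i (a i + 1))).Sublist w}ᶜ) ∩
          ⋂ i ∈ {i : Fin k | a i < l},
            lconc
              {w | (((List.finRange k).take i.val).flatMap
                      fun i' => wpow (u i') (a i')).Sublist w}
              (lconc {u i}
                {w | (((List.finRange k).drop (i.val + 1)).flatMap
                        fun i' => wpow (u i') (a i')).Sublist w})) :=
  stmt_11_general l k hl hk u hnd
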